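/- arXiv:1312.3013 — 6 statements merged into one kernel-verified Lean document; each statement's English description precedes it below -/
import Mathlib

section
/- Let f : ℝ^n → ℝ be concave and differentiable, and let L be a symmetric positive semidefinite n×n matrix. Then f(x₁) ≥ f(x₂) + ⟨∇f(x₂), x₁ - x₂⟩ - (1/2)‖x₁ - x₂‖²_L holds for all x₁, x₂ if and only if ⟨∇f(x₁) - ∇f(x₂), x₂ - x₁⟩ ≤ ‖x₁ - x₂‖²_L holds for all x₁, x₂. -/
/-!
Write `Q` for the quadratic form `v ↦ v ⬝ᵥ L *ᵥ v` and `d = y - x`. Adding the lower bound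
at `(x, y)` and at `(y, x)` gives the gradient inequality, since `Q (-d) = Q d`. Conversely,
along the segment `t ↦ x + t • d` the function `g t = f (x + t • d) - t * f' x d + t² Q d / 2`
satisfies `t g' t ≥ 0` by the gradient inequality at `(x + t • d, x)`, because
`Q (t • d) = t² Q d`; so `g 0 ≤ g 1`, which is the lower bound.
-/

open Matrix

/-- The continuous linear map `w ↦ v ⬝ᵥ w`, used to represent a gradient. -/
noncomputable def dotCLM {n : ℕ} (v : Fin n → ℝ) : (Fin n → ℝ) →L[ℝ] ℝ :=
  ∑ i, v i • ContinuousLinearMap.proj (R := ℝ) (φ := fun _ : Fin n => ℝ) i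

lemma dotCLM_apply {n : ℕ} (v w : Fin n → ℝ) : dotCLM v w = v ⬝ᵥ w := by
  simp [dotCLM, dotProduct]

lemma Matrix.toQuadraticForm'_apply {n : Type*} [Fintype n] [DecidableEq n] {R : Type*}
    [CommRing R] (M : Matrix n n R) (v : n → R) : M.toQuadraticForm' v = v ⬝ᵥ M *ᵥ v := by
  simp [Matrix.toQuadraticForm', toLinearMap₂'_apply']

section QuadraticLowerBound

open Set

variable {E : Type*} [NormedAddCommGroup E] [NormedSpace ℝ E] {f : E → ℝ} {f' : E → E →L[ℝ] ℝ}
  (Q : QuadraticForm ℝ E)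

theorem gradient_gap_le_of_quadratic_lower_bound
    (h : ∀ x y, f x + f' x (y - x) - Q (y - x) / 2 ≤ f y) (x y : E) :
    (f' x - f' y) (y - x) ≤ Q (x - y) := by
  have hxy := h x y
  have hyx := h y x
  rw [← neg_sub y x, map_neg, QuadraticMap.map_neg] at hyx
  rw [← neg_sub y x, QuadraticMap.map_neg, _root_.sub_apply]
  linarith

theorem quadratic_lower_bound_of_gradient_gap_le (hf : ∀ x, HasFDerivAt f (f' x) x)
    (h : ∀ x y, (f' x - f' y) (y - x) ≤ Q (x - y)) (x y : E) :
    f x + f' x (y - x) - Q (y - x) / 2 ≤ f y := by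
  set d := y - x
  set g : ℝ → ℝ := fun t => f (x + t • d) - t * f' x d + t ^ 2 / 2 * Q d
  have hg : ∀ t, HasDerivAt g (f' (x + t • d) d - f' x d + t * Q d) t := by
    intro t
    have hline : HasDerivAt (fun t : ℝ => x + t • d) d t := by
      simpa using ((hasDerivAt_id t).smul_const d).const_add x
    have hsq : HasDerivAt (fun t : ℝ => t ^ 2 / 2 * Q d) (t * Q d) t :=
      (((hasDerivAt_pow 2 t).div_const 2).mul_const (Q d)).congr_deriv (by ring)
    exact (((hf _).comp_hasDerivAt t hline).sub (hasDerivAt_mul_const _)).add hsq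
  have hg_nonneg : ∀ t ∈ interior (Ici (0 : ℝ)), 0 ≤ f' (x + t • d) d - f' x d + t * Q d := by
    intro t ht
    rw [interior_Ici] at ht
    have hgap := h (x + t • d) x
    rw [sub_add_cancel_left, add_sub_cancel_left, QuadraticMap.map_smul, smul_eq_mul,
      map_neg, map_smul, smul_eq_mul, _root_.sub_apply] at hgap
    nlinarith [mem_Ioi.mp ht]
  have hmono : MonotoneOn g (Ici 0) :=
    monotoneOn_of_hasDerivWithinAt_nonneg (convex_Ici 0)
      (fun t _ => (hg t).continuousAt.continuousWithinAt)
      (fun t _ => (hg t).hasDerivWithinAt) hg_nonneg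
  have hg01 := hmono self_mem_Ici (mem_Ici.mpr zero_le_one) zero_le_one
  simp only [g, d, zero_smul, add_zero, one_smul, add_sub_cancel] at hg01
  linarith

theorem quadratic_lower_bound_iff_gradient_gap_le (hf : ∀ x, HasFDerivAt f (f' x) x) :
    (∀ x y, f x + f' x (y - x) - Q (y - x) / 2 ≤ f y) ↔
      ∀ x y, (f' x - f' y) (y - x) ≤ Q (x - y) :=
  ⟨gradient_gap_le_of_quadratic_lower_bound Q, quadratic_lower_bound_of_gradient_gap_le Q hf⟩

end QuadraticLowerBound

theorem quad_lower_bound_iff_concave_general {n : ℕ} (f : (Fin n → ℝ) → ℝ)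
    (f' : (Fin n → ℝ) → (Fin n → ℝ))
    (hdiff : ∀ x, HasFDerivAt f (dotCLM (f' x)) x)
    (L : Matrix (Fin n) (Fin n) ℝ) :
    (∀ x₁ x₂, f x₁ ≥ f x₂ + f' x₂ ⬝ᵥ (x₁ - x₂)
        - (1 / 2) * ((x₁ - x₂) ⬝ᵥ L.mulVec (x₁ - x₂)))
      ↔ (∀ x₁ x₂, (f' x₁ - f' x₂) ⬝ᵥ (x₂ - x₁) ≤ (x₁ - x₂) ⬝ᵥ L.mulVec (x₁ - x₂)) := by
  have key := quadratic_lower_bound_iff_gradient_gap_le L.toQuadraticForm' hdiff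
  simp only [_root_.sub_apply, dotCLM_apply, ← sub_dotProduct, Matrix.toQuadraticForm'_apply]
    at key
  rw [forall_comm, ← key]
  refine forall₂_congr fun x₂ x₁ => ?_
  rw [ge_iff_le]
  ring_nf

/-- Corollary 3: for concave differentiable `f`, the quadratic lower bound with matrix `L`
holds iff the corresponding monotonicity-type inequality holds. -/
theorem quad_lower_bound_iff_concave {n : ℕ} (f : (Fin n → ℝ) → ℝ)
    (f' : (Fin n → ℝ) → (Fin n → ℝ))
    (hconc : ConcaveOn ℝ Set.univ f)
    (hdiff : ∀ x, HasFDerivAt f (dotCLM (f' x)) x)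
    (L : Matrix (Fin n) (Fin n) ℝ) (hL : L.PosSemidef) :
    (∀ x₁ x₂, f x₁ ≥ f x₂ + f' x₂ ⬝ᵥ (x₁ - x₂)
        - (1 / 2) * ((x₁ - x₂) ⬝ᵥ L.mulVec (x₁ - x₂)))
      ↔ (∀ x₁ x₂, (f' x₁ - f' x₂) ⬝ᵥ (x₂ - x₁) ≤ (x₁ - x₂) ⬝ᵥ L.mulVec (x₁ - x₂)) :=
  quad_lower_bound_iff_concave_general f f' hdiff L
end

section
/- Let f : ℝ^n → ℝ be differentiable and strongly convex with matrix H (i.e., f(x) - (1/2)xᵀHx is convex), let h : ℝ^n → ℝ ∪ {∞} be proper, closed, and convex, and let C ∈ ℝ^{(m+p)×n}. For ν ∈ ℝ^{m+p} define x*(ν) = argmin_x { f(x) + h(x) + νᵀCx } (assumed to exist). Then for all ν₁, ν₂: ‖x*(ν₁) - x*(ν₂)‖_H ≤ ‖ν₁ - ν₂‖_{C H⁻¹ Cᵀ}. -/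
/-!
Write `φ_ν = f + h + ⟨ν, C ·⟩`. Since `φ_ν - ½‖·‖²_H` is convex, comparing `φ_ν` at its
minimizer `x*(ν)` with its values along the segment towards any `y` and letting the step tend
to `0` gives quadratic growth: `φ_ν(x*(ν)) + ½‖y - x*(ν)‖²_H ≤ φ_ν(y)`. Adding this for `ν₁` at
`x*(ν₂)` and for `ν₂` at `x*(ν₁)`, the values of `f` and `h` cancel, leaving
`‖d‖²_H ≤ ⟨Cᵀ(ν₁ - ν₂), d⟩` for `d = x*(ν₂) - x*(ν₁)`; Cauchy–Schwarz for the dual pair of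
norms `‖·‖_H`, `‖·‖_{H⁻¹}` bounds the right side by `‖Cᵀ(ν₁ - ν₂)‖_{H⁻¹} ‖d‖_H`.
The extended-valued `h` is handled through its real values on its effective domain.
-/

open Matrix

open Set Filter Topology

theorem LinearMap.BilinForm.apply_smul_add_smul_self {R E : Type*} [CommRing R] [AddCommGroup E]
    [Module R E] (B : LinearMap.BilinForm R E) (x y : E) {a b : R} (hab : a + b = 1) :
    B (a • x + b • y) (a • x + b • y) = a * B x x + b * B y y - a * b * B (x - y) (x - y) := by
  obtain rfl : b = 1 - a := eq_sub_of_add_eq' hab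
  simp only [map_add, map_sub, map_smul, LinearMap.add_apply, LinearMap.sub_apply,
    LinearMap.smul_apply, smul_eq_mul]
  ring

theorem ConvexOn.add_half_apply_sub_le_of_isMinOn {E : Type*} [AddCommGroup E] [Module ℝ E]
    {s : Set E} {ψ : E → ℝ} (hψ : ConvexOn ℝ s ψ) (B : LinearMap.BilinForm ℝ E) {x y : E}
    (hmin : IsMinOn (fun z => ψ z + 1 / 2 * B z z) s x) (hx : x ∈ s) (hy : y ∈ s) :
    ψ x + 1 / 2 * B x x + 1 / 2 * B (y - x) (y - x) ≤ ψ y + 1 / 2 * B y y := by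
  set φ := fun z => ψ z + 1 / 2 * B z z
  set c := 1 / 2 * B (y - x) (y - x)
  have hsegment : ∀ θ ∈ Ioo (0 : ℝ) 1, φ x + (1 - θ) * c ≤ φ y := by
    rintro θ ⟨hθ₀, hθ₁⟩
    have hcomb : θ + (1 - θ) = 1 := by ring
    have hmem := hψ.1 hy hx hθ₀.le (sub_nonneg.2 hθ₁.le) hcomb
    have hconv : ψ (θ • y + (1 - θ) • x) ≤ θ * ψ y + (1 - θ) * ψ x :=
      hψ.2 hy hx hθ₀.le (sub_nonneg.2 hθ₁.le) hcomb
    have hle : φ x ≤ φ (θ • y + (1 - θ) • x) := hmin hmem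
    simp only [φ, B.apply_smul_add_smul_self y x hcomb] at hle
    have : θ * (φ x + (1 - θ) * c) ≤ θ * φ y := by simp only [φ, c]; linarith
    exact le_of_mul_le_mul_left this hθ₀
  have hlim : Tendsto (fun θ : ℝ => φ x + (1 - θ) * c) (𝓝[>] 0) (𝓝 (φ x + c)) := by
    have hcont : Continuous fun θ : ℝ => φ x + (1 - θ) * c := by fun_prop
    simpa using (hcont.tendsto 0).mono_left nhdsWithin_le_nhds
  exact le_of_tendsto hlim (eventually_of_mem (Ioo_mem_nhdsGT one_pos) hsegment)

section EReal

variable {E : Type*} {h : E → EReal}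

theorem convexOn_toReal_setOf_ne_top [AddCommGroup E] [Module ℝ E] (hbot : ∀ x, h x ≠ ⊥)
    (hconv : ∀ (x y : E) (θ : ℝ), 0 ≤ θ → θ ≤ 1 →
      h (θ • x + (1 - θ) • y) ≤ (θ : EReal) * h x + ((1 - θ : ℝ) : EReal) * h y) :
    ConvexOn ℝ {x | h x ≠ ⊤} fun x => (h x).toReal := by
  have hcomb : ∀ x ∈ {x | h x ≠ ⊤}, ∀ y ∈ {x | h x ≠ ⊤}, ∀ a b : ℝ, 0 ≤ a → 0 ≤ b → a + b = 1 →
      h (a • x + b • y) ≤ ((a * (h x).toReal + b * (h y).toReal : ℝ) : EReal) := by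
    intro x hx y hy a b ha hb hab
    obtain rfl : b = 1 - a := eq_sub_of_add_eq' hab
    have := hconv x y a ha (by linarith)
    rwa [← EReal.coe_toReal hx (hbot x), ← EReal.coe_toReal hy (hbot y), ← EReal.coe_mul,
      ← EReal.coe_mul, ← EReal.coe_add] at this
  refine ⟨fun x hx y hy a b ha hb hab => ?_, fun x hx y hy a b ha hb hab => ?_⟩
  · exact ((hcomb x hx y hy a b ha hb hab).trans_lt (EReal.coe_lt_top _)).ne
  · exact EReal.toReal_le_toReal (hcomb x hx y hy a b ha hb hab) (hbot _) (EReal.coe_ne_top _)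

variable {g : E → ℝ} {x : E}

theorem ne_top_of_forall_coe_add_le (hmin : ∀ y, (g x : EReal) + h x ≤ g y + h y)
    (hdom : ∃ y, h y ≠ ⊤) : h x ≠ ⊤ := by
  obtain ⟨y, hy⟩ := hdom
  intro hx
  have := hmin y
  rw [hx, EReal.coe_add_top, top_le_iff] at this
  exact (EReal.add_lt_top (EReal.coe_ne_top _) hy).ne this

theorem isMinOn_add_toReal_of_forall_coe_add_le (hbot : ∀ y, h y ≠ ⊥) (hx : h x ≠ ⊤)
    (hmin : ∀ y, (g x : EReal) + h x ≤ g y + h y) :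
    IsMinOn (fun y => g y + (h y).toReal) {y | h y ≠ ⊤} x := by
  intro y hy
  have := hmin y
  rwa [← EReal.coe_toReal hx (hbot x), ← EReal.coe_toReal hy (hbot y), ← EReal.coe_add,
    ← EReal.coe_add, EReal.coe_le_coe_iff] at this

theorem add_toReal_add_half_apply_sub_le_of_forall_coe_add_le [AddCommGroup E] [Module ℝ E]
    (B : LinearMap.BilinForm ℝ E) (hg : ConvexOn ℝ univ fun x => g x - 1 / 2 * B x x)
    (hbot : ∀ x, h x ≠ ⊥)
    (hconv : ∀ (x y : E) (θ : ℝ), 0 ≤ θ → θ ≤ 1 →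
      h (θ • x + (1 - θ) • y) ≤ (θ : EReal) * h x + ((1 - θ : ℝ) : EReal) * h y)
    (hdom : ∃ y, h y ≠ ⊤) (hmin : ∀ y, (g x : EReal) + h x ≤ g y + h y) {y : E}
    (hy : h y ≠ ⊤) :
    g x + (h x).toReal + 1 / 2 * B (y - x) (y - x) ≤ g y + (h y).toReal := by
  have hx := ne_top_of_forall_coe_add_le hmin hdom
  have hh := convexOn_toReal_setOf_ne_top hbot hconv
  have hψ := (hg.subset (subset_univ _) hh.1).add hh
  have hminOn : IsMinOn (fun z => (g z - 1 / 2 * B z z + (h z).toReal) + 1 / 2 * B z z)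
      {z | h z ≠ ⊤} x := by
    convert isMinOn_add_toReal_of_forall_coe_add_le hbot hx hmin using 1
    funext z
    ring
  have := hψ.add_half_apply_sub_le_of_isMinOn B hminOn hx hy
  simp only [Pi.add_apply] at this
  linarith

end EReal

theorem Matrix.PosDef.sq_dotProduct_le {n : Type*} [Fintype n] [DecidableEq n]
    {H : Matrix n n ℝ} (hH : H.PosDef) (w d : n → ℝ) :
    (w ⬝ᵥ d) ^ 2 ≤ (w ⬝ᵥ H⁻¹ *ᵥ w) * (d ⬝ᵥ H *ᵥ d) := by
  have hHsymm : H.IsSymm := by simpa using hH.isHermitian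
  have hBsymm : LinearMap.IsSymm (toBilin' H) :=
    LinearMap.BilinForm.isSymm_iff.1 (isSymm_toBilin'_iff_isSymm.2 hHsymm)
  have hBnonneg : ∀ x, 0 ≤ toBilin' H x x := fun x => by
    rw [toBilin'_apply']; exact hH.posSemidef.dotProduct_mulVec_nonneg x
  set u := H⁻¹ *ᵥ w
  have hu : H *ᵥ u = w := by
    rw [mulVec_mulVec, mul_nonsing_inv _ hH.det_pos.ne'.isUnit, one_mulVec]
  have hud : u ⬝ᵥ H *ᵥ d = w ⬝ᵥ d := by
    rw [dotProduct_mulVec, ← mulVec_transpose, hHsymm.eq, hu]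
  have huu : u ⬝ᵥ H *ᵥ u = w ⬝ᵥ u := by rw [hu, dotProduct_comm]
  simpa only [toBilin'_apply', hud, huu] using
    (toBilin' H).apply_sq_le_of_symm hBnonneg hBsymm u d

theorem Matrix.PosDef.dotProduct_mulVec_le_inv_of_le_dotProduct {n : Type*} [Fintype n]
    [DecidableEq n] {H : Matrix n n ℝ} (hH : H.PosDef) {w d : n → ℝ}
    (hle : d ⬝ᵥ H *ᵥ d ≤ w ⬝ᵥ d) : d ⬝ᵥ H *ᵥ d ≤ w ⬝ᵥ H⁻¹ *ᵥ w := by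
  have hq : 0 ≤ d ⬝ᵥ H *ᵥ d := by simpa using hH.posSemidef.dotProduct_mulVec_nonneg d
  have hr : 0 ≤ w ⬝ᵥ H⁻¹ *ᵥ w := by simpa using hH.inv.posSemidef.dotProduct_mulVec_nonneg w
  have hcs := hH.sq_dotProduct_le w d
  nlinarith

theorem ConvexOn.add_dotProduct_mulVec {k l : Type*} [Fintype k] [Fintype l] {s : Set (l → ℝ)}
    {f : (l → ℝ) → ℝ} (hf : ConvexOn ℝ s f) (C : Matrix k l ℝ) (ν : k → ℝ) :
    ConvexOn ℝ s fun x => f x + ν ⬝ᵥ C *ᵥ x :=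
  hf.add (((dotProductBilin ℝ ℝ ν).comp C.mulVecLin).convexOn hf.1)

theorem Matrix.dotProduct_mul_mul_transpose_mulVec {R k l : Type*} [CommSemiring R] [Fintype k]
    [Fintype l] (C : Matrix k l R) (M : Matrix l l R) (v : k → R) :
    v ⬝ᵥ (C * M * Cᵀ) *ᵥ v = (Cᵀ *ᵥ v) ⬝ᵥ M *ᵥ (Cᵀ *ᵥ v) := by
  rw [← mulVec_mulVec, ← mulVec_mulVec, dotProduct_mulVec, ← mulVec_transpose]

theorem minimizer_H_norm_bound_general {n m p : ℕ} (f : (Fin n → ℝ) → ℝ)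
    (H : Matrix (Fin n) (Fin n) ℝ) (hH : H.PosDef)
    (hstrong : ConvexOn ℝ Set.univ (fun x => f x - (1 / 2) * (x ⬝ᵥ H.mulVec x)))
    (h : (Fin n → ℝ) → EReal)
    (hproper_bot : ∀ x, h x ≠ ⊥) (hproper_top : ∃ x, h x ≠ ⊤)
    (hhconv : ∀ (x y : Fin n → ℝ) (θ : ℝ), 0 ≤ θ → θ ≤ 1 →
      h (θ • x + (1 - θ) • y) ≤ (θ : EReal) * h x + ((1 - θ : ℝ) : EReal) * h y)
    (C : Matrix (Fin (m + p)) (Fin n) ℝ)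
    (xs : (Fin (m + p) → ℝ) → (Fin n → ℝ))
    (hxs : ∀ ν x, ((f (xs ν) + ν ⬝ᵥ C.mulVec (xs ν) : ℝ) : EReal) + h (xs ν)
        ≤ ((f x + ν ⬝ᵥ C.mulVec x : ℝ) : EReal) + h x)
    (ν₁ ν₂ : Fin (m + p) → ℝ) :
    Real.sqrt ((xs ν₁ - xs ν₂) ⬝ᵥ H.mulVec (xs ν₁ - xs ν₂))
      ≤ Real.sqrt ((ν₁ - ν₂) ⬝ᵥ (C * H⁻¹ * Cᵀ).mulVec (ν₁ - ν₂)) := by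
  have hgrowth : ∀ ν ν', f (xs ν) + ν ⬝ᵥ C *ᵥ xs ν + (h (xs ν)).toReal
      + 1 / 2 * ((xs ν' - xs ν) ⬝ᵥ H *ᵥ (xs ν' - xs ν))
      ≤ f (xs ν') + ν ⬝ᵥ C *ᵥ xs ν' + (h (xs ν')).toReal := fun ν ν' => by
    have hg : ConvexOn ℝ univ fun x => f x + ν ⬝ᵥ C *ᵥ x - 1 / 2 * toBilin' H x x := by
      refine (hstrong.add_dotProduct_mulVec C ν).congr fun x _ => ?_
      rw [toBilin'_apply']
      ring
    have hν' :=
      ne_top_of_forall_coe_add_le (g := fun x => f x + ν' ⬝ᵥ C *ᵥ x) (hxs ν') hproper_top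
    simpa only [toBilin'_apply'] using
      add_toReal_add_half_apply_sub_le_of_forall_coe_add_le (toBilin' H) hg hproper_bot hhconv
        hproper_top (hxs ν) hν'
  set w := Cᵀ *ᵥ (ν₁ - ν₂)
  set d := xs ν₂ - xs ν₁
  have hsymm : (xs ν₁ - xs ν₂) ⬝ᵥ H *ᵥ (xs ν₁ - xs ν₂) = d ⬝ᵥ H *ᵥ d := by
    rw [← neg_sub, mulVec_neg, neg_dotProduct, dotProduct_neg, neg_neg]
  have hw : w ⬝ᵥ d = ν₁ ⬝ᵥ C *ᵥ xs ν₂ - ν₁ ⬝ᵥ C *ᵥ xs ν₁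
      - (ν₂ ⬝ᵥ C *ᵥ xs ν₂ - ν₂ ⬝ᵥ C *ᵥ xs ν₁) := by
    simp only [w, d]
    rw [mulVec_transpose, ← dotProduct_mulVec, mulVec_sub, sub_dotProduct, dotProduct_sub,
      dotProduct_sub]
  have hstrongMono : d ⬝ᵥ H *ᵥ d ≤ w ⬝ᵥ d := by
    linarith [hgrowth ν₁ ν₂, hgrowth ν₂ ν₁]
  rw [hsymm, dotProduct_mul_mul_transpose_mulVec]
  exact Real.sqrt_le_sqrt (hH.dotProduct_mulVec_le_inv_of_le_dotProduct hstrongMono)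

/-- Lemma 7: for `f` differentiable and strongly convex with matrix `H` (i.e.
`f - (1/2)xᵀHx` is convex), `h` proper closed convex, and
`x*(ν) = argmin_x { f(x) + h(x) + νᵀCx }`, one has
`‖x*(ν₁) - x*(ν₂)‖_H ≤ ‖ν₁ - ν₂‖_{CH⁻¹Cᵀ}`. -/
theorem minimizer_H_norm_bound {n m p : ℕ} (f : (Fin n → ℝ) → ℝ)
    (f' : (Fin n → ℝ) → (Fin n → ℝ))
    (H : Matrix (Fin n) (Fin n) ℝ) (hH : H.PosDef)
    (hdiff : ∀ x, HasFDerivAt f (dotCLM (f' x)) x)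
    (hstrong : ConvexOn ℝ Set.univ (fun x => f x - (1 / 2) * (x ⬝ᵥ H.mulVec x)))
    (h : (Fin n → ℝ) → EReal)
    (hproper_bot : ∀ x, h x ≠ ⊥) (hproper_top : ∃ x, h x ≠ ⊤)
    (hclosed : LowerSemicontinuous h)
    (hhconv : ∀ (x y : Fin n → ℝ) (θ : ℝ), 0 ≤ θ → θ ≤ 1 →
      h (θ • x + (1 - θ) • y) ≤ (θ : EReal) * h x + ((1 - θ : ℝ) : EReal) * h y)
    (C : Matrix (Fin (m + p)) (Fin n) ℝ)
    (xs : (Fin (m + p) → ℝ) → (Fin n → ℝ))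
    (hxs : ∀ ν x, ((f (xs ν) + ν ⬝ᵥ C.mulVec (xs ν) : ℝ) : EReal) + h (xs ν)
        ≤ ((f x + ν ⬝ᵥ C.mulVec x : ℝ) : EReal) + h x)
    (ν₁ ν₂ : Fin (m + p) → ℝ) :
    Real.sqrt ((xs ν₁ - xs ν₂) ⬝ᵥ H.mulVec (xs ν₁ - xs ν₂))
      ≤ Real.sqrt ((ν₁ - ν₂) ⬝ᵥ (C * H⁻¹ * Cᵀ).mulVec (ν₁ - ν₂)) :=
  minimizer_H_norm_bound_general f H hH hstrong h hproper_bot hproper_top hhconv C xs hxs ν₁ ν₂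
end

section
/- Let f(x) = (1/2)xᵀHx + ζᵀx with H ∈ S₊₊ⁿ, let A ∈ ℝ^{m×n} have full row rank, b ∈ ℝ^m, C ∈ ℝ^{q×n}, c ∈ ℝ^q, and let d(ν) = min_{x : Ax = b} { f(x) + νᵀ(Cx - c) }. Then d is a concave quadratic function of ν whose Hessian equals -C H^{-1/2}(I - M) H^{-1/2} Cᵀ, where M = H^{-1/2} Aᵀ (A H⁻¹ Aᵀ)⁻¹ A H^{-1/2}. -/
open Matrix

/-- The square root of a positive semidefinite matrix, as `Matrix.PosSemidef.sqrt` was defined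
in Mathlib of December 2024 (removed since). -/
noncomputable def posSemidefSqrt {n : Type*} [Fintype n] [DecidableEq n]
    {A : Matrix n n ℝ} (hA : A.PosSemidef) : Matrix n n ℝ :=
  hA.isHermitian.eigenvectorUnitary.1 * diagonal ((↑) ∘ (Real.sqrt ·) ∘ hA.isHermitian.eigenvalues) *
  (star hA.isHermitian.eigenvectorUnitary : Matrix n n ℝ)

/-!
For fixed `ν`, minimizing `f(x) + νᵀ(Cx - c)` over `{Ax = b}` is an equality-constrained
quadratic program with linear term `w = ζ + Cᵀν`. Its KKT system `Hx + w = Aᵀμ`, `Ax = b` has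
the explicit solution `x = H⁻¹Aᵀ S⁻¹ b - P w` with `S = A H⁻¹ Aᵀ` and
`P = H⁻¹ - H⁻¹Aᵀ S⁻¹ A H⁻¹`, and convexity of `f` makes every KKT point a minimizer. The optimal
value `-(1/2) wᵀPw + wᵀH⁻¹AᵀS⁻¹b + (1/2) bᵀS⁻¹b` is a quadratic in `ν` with Hessian `-CPCᵀ`, and
`P = H^{-1/2}(1 - M)H^{-1/2}` because `H^{-1/2}H^{-1/2} = H⁻¹`. Concavity holds for any dual
function, as a pointwise minimum of affine functions of `ν`.
-/

theorem ConcaveOn.of_isLeast {ι E : Type*} [AddCommGroup E] [Module ℝ E] {p : ι → Prop}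
    {φ : ι → E → ℝ} (hφ : ∀ x, ConcaveOn ℝ Set.univ (φ x)) {d : E → ℝ}
    (hd : ∀ ν, IsLeast {r | ∃ x, p x ∧ r = φ x ν} (d ν)) : ConcaveOn ℝ Set.univ d := by
  refine ⟨convex_univ, fun ν₁ _ ν₂ _ a b ha hb hab => ?_⟩
  obtain ⟨⟨x, hx, hdx⟩, -⟩ := hd (a • ν₁ + b • ν₂)
  calc a • d ν₁ + b • d ν₂ ≤ a • φ x ν₁ + b • φ x ν₂ := by
        gcongr
        · exact (hd ν₁).2 ⟨x, hx, rfl⟩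
        · exact (hd ν₂).2 ⟨x, hx, rfl⟩
    _ ≤ φ x (a • ν₁ + b • ν₂) := (hφ x).2 trivial trivial ha hb hab
    _ = d (a • ν₁ + b • ν₂) := hdx.symm

section

variable {n m q : Type*} [Fintype n] [Fintype m] [Fintype q]

theorem Matrix.dotProduct_mulVec_comm {R : Type*} [CommSemiring R] {H : Matrix n n R}
    (hH : H.IsSymm) (x y : n → R) : x ⬝ᵥ H *ᵥ y = y ⬝ᵥ H *ᵥ x := by
  rw [dotProduct_mulVec, ← mulVec_transpose, hH.eq, dotProduct_comm]

theorem Matrix.dotProduct_mulVec_add_transpose_mulVec {R : Type*} [CommRing R]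
    {P : Matrix n n R} (hP : P.IsSymm) (C : Matrix q n R) (ζ : n → R) (ν : q → R) :
    (ζ + Cᵀ *ᵥ ν) ⬝ᵥ P *ᵥ (ζ + Cᵀ *ᵥ ν) =
      ν ⬝ᵥ (C * P * Cᵀ) *ᵥ ν + 2 * ((C *ᵥ (P *ᵥ ζ)) ⬝ᵥ ν) + ζ ⬝ᵥ P *ᵥ ζ := by
  have hshift : ∀ v, (Cᵀ *ᵥ ν) ⬝ᵥ v = (C *ᵥ v) ⬝ᵥ ν := fun v => by
    rw [mulVec_transpose, ← dotProduct_mulVec, dotProduct_comm]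
  have hcross : ζ ⬝ᵥ P *ᵥ (Cᵀ *ᵥ ν) = (C *ᵥ (P *ᵥ ζ)) ⬝ᵥ ν := by
    rw [dotProduct_mulVec_comm hP, hshift]
  have hquad : (Cᵀ *ᵥ ν) ⬝ᵥ P *ᵥ (Cᵀ *ᵥ ν) = ν ⬝ᵥ (C * P * Cᵀ) *ᵥ ν := by
    rw [hshift, dotProduct_comm, ← mulVec_mulVec, ← mulVec_mulVec]
  rw [mulVec_add, dotProduct_add, add_dotProduct, add_dotProduct, hcross, hquad, hshift]
  ring

theorem Matrix.PosDef.mul_mul_transpose_of_rank_eq {H : Matrix n n ℝ} (hH : H.PosDef)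
    {A : Matrix m n ℝ} (hA : A.rank = Fintype.card m) : (A * H * Aᵀ).PosDef := by
  have hrows : LinearIndependent ℝ A.row :=
    linearIndependent_iff_card_eq_finrank_span.mpr
      (by rw [Set.finrank, ← rank_eq_finrank_span_row, hA])
  simpa [conjTranspose_eq_transpose_of_trivial] using
    hH.mul_mul_conjTranspose_same (vecMul_injective_iff.mpr hrows)

variable {H : Matrix n n ℝ} {A : Matrix m n ℝ} {w x₀ : n → ℝ} {μ : m → ℝ}

theorem quadratic_le_of_kkt (hH : H.PosSemidef) (hkkt : H *ᵥ x₀ + w = Aᵀ *ᵥ μ) {x : n → ℝ}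
    (hx : A *ᵥ x = A *ᵥ x₀) :
    1 / 2 * (x₀ ⬝ᵥ H *ᵥ x₀) + w ⬝ᵥ x₀ ≤ 1 / 2 * (x ⬝ᵥ H *ᵥ x) + w ⬝ᵥ x := by
  obtain ⟨e, rfl⟩ : ∃ e, x = x₀ + e := ⟨x - x₀, by abel⟩
  have hAe : A *ᵥ e = 0 := by simpa [mulVec_add] using hx
  have hcross : e ⬝ᵥ H *ᵥ x₀ = x₀ ⬝ᵥ H *ᵥ e :=
    dotProduct_mulVec_comm (isHermitian_iff_isSymm.mp hH.isHermitian) _ _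
  have hstationary : x₀ ⬝ᵥ H *ᵥ e + w ⬝ᵥ e = 0 := by
    rw [← hcross, dotProduct_comm w, ← dotProduct_add, hkkt, mulVec_transpose, dotProduct_comm,
      ← dotProduct_mulVec, hAe, dotProduct_zero]
  have hcurv : 0 ≤ e ⬝ᵥ H *ᵥ e := by simpa using hH.dotProduct_mulVec_nonneg e
  simp only [mulVec_add, dotProduct_add, add_dotProduct]
  linarith

theorem dotProduct_mulVec_self_of_kkt (hkkt : H *ᵥ x₀ + w = Aᵀ *ᵥ μ) :
    x₀ ⬝ᵥ H *ᵥ x₀ = μ ⬝ᵥ A *ᵥ x₀ - w ⬝ᵥ x₀ := by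
  rw [eq_sub_iff_add_eq, dotProduct_comm w, ← dotProduct_add, hkkt, mulVec_transpose,
    dotProduct_comm, ← dotProduct_mulVec]

end

section

variable {n m : Type*} [Fintype n] [Fintype m] [DecidableEq n] [DecidableEq m]

theorem Matrix.PosSemidef.posSemidefSqrt_mul_self {A : Matrix n n ℝ} (hA : A.PosSemidef) :
    posSemidefSqrt hA * posSemidefSqrt hA = A := by
  set U : Matrix n n ℝ := hA.isHermitian.eigenvectorUnitary.1
  have hU : star U * U = 1 := Unitary.coe_star_mul_self _
  have hspec := hA.isHermitian.spectral_theorem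
  rw [Unitary.conjStarAlgAut_apply] at hspec
  conv_rhs => rw [hspec]
  simp only [posSemidefSqrt, Matrix.mul_assoc]
  rw [← Matrix.mul_assoc _ U, hU, Matrix.one_mul, ← Matrix.mul_assoc (diagonal _),
    diagonal_mul_diagonal]
  congr 3
  funext i
  simp [Real.mul_self_sqrt (hA.eigenvalues_nonneg i)]

variable (H : Matrix n n ℝ) (A : Matrix m n ℝ)

noncomputable def weightedRightInverse : Matrix n m ℝ := H⁻¹ * Aᵀ * (A * H⁻¹ * Aᵀ)⁻¹

noncomputable def constrainedInverse : Matrix n n ℝ := H⁻¹ - weightedRightInverse H A * A * H⁻¹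

variable {H A}

theorem mul_weightedRightInverse (hS : IsUnit (A * H⁻¹ * Aᵀ).det) :
    A * weightedRightInverse H A = 1 := by
  rw [weightedRightInverse, ← Matrix.mul_assoc, ← Matrix.mul_assoc, mul_nonsing_inv _ hS]

theorem mul_constrainedInverse (hS : IsUnit (A * H⁻¹ * Aᵀ).det) :
    A * constrainedInverse H A = 0 := by
  rw [constrainedInverse, Matrix.mul_sub, ← Matrix.mul_assoc, ← Matrix.mul_assoc,
    mul_weightedRightInverse hS, Matrix.one_mul, sub_self]

theorem self_mul_weightedRightInverse (hH : IsUnit H.det) :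
    H * weightedRightInverse H A = Aᵀ * (A * H⁻¹ * Aᵀ)⁻¹ := by
  rw [weightedRightInverse, Matrix.mul_assoc, Matrix.mul_assoc, ← Matrix.mul_assoc H,
    mul_nonsing_inv _ hH, Matrix.one_mul]

theorem self_mul_constrainedInverse (hH : IsUnit H.det) :
    H * constrainedInverse H A = 1 - Aᵀ * (A * H⁻¹ * Aᵀ)⁻¹ * (A * H⁻¹) := by
  rw [constrainedInverse, Matrix.mul_sub, mul_nonsing_inv _ hH, Matrix.mul_assoc _ A,
    ← Matrix.mul_assoc H, self_mul_weightedRightInverse hH]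

theorem transpose_weightedRightInverse (hH : H.IsSymm) :
    (weightedRightInverse H A)ᵀ = (A * H⁻¹ * Aᵀ)⁻¹ * (A * H⁻¹) := by
  have hS : (A * H⁻¹ * Aᵀ).IsSymm := by
    simp [IsSymm, transpose_mul, hH.inv.eq, Matrix.mul_assoc]
  rw [weightedRightInverse, transpose_mul, transpose_mul, hS.inv.eq, hH.inv.eq,
    transpose_transpose, Matrix.mul_assoc]

theorem isSymm_constrainedInverse (hH : H.IsSymm) : (constrainedInverse H A).IsSymm := by
  rw [IsSymm, constrainedInverse, transpose_sub, hH.inv.eq, Matrix.mul_assoc, transpose_mul,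
    transpose_mul, transpose_weightedRightInverse hH, hH.inv.eq, ← Matrix.mul_assoc,
    weightedRightInverse]

theorem mul_one_sub_mul_eq_constrainedInverse {r : Matrix n n ℝ} (hr : r * r = H⁻¹) :
    r * (1 - r * Aᵀ * (A * H⁻¹ * Aᵀ)⁻¹ * A * r) * r = constrainedInverse H A := by
  rw [constrainedInverse, weightedRightInverse, ← hr]
  simp only [Matrix.mul_sub, Matrix.sub_mul, Matrix.mul_one, Matrix.mul_assoc]

theorem isLeast_quadratic_of_mulVec_eq (hH : H.PosDef) (hS : IsUnit (A * H⁻¹ * Aᵀ).det)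
    (w : n → ℝ) (b : m → ℝ) (k : ℝ) :
    IsLeast {r | ∃ x, A *ᵥ x = b ∧ r = 1 / 2 * (x ⬝ᵥ H *ᵥ x) + w ⬝ᵥ x + k}
      (-(1 / 2) * (w ⬝ᵥ constrainedInverse H A *ᵥ w) + w ⬝ᵥ weightedRightInverse H A *ᵥ b
        + 1 / 2 * (b ⬝ᵥ (A * H⁻¹ * Aᵀ)⁻¹ *ᵥ b) + k) := by
  have hHu : IsUnit H.det := (H.isUnit_iff_isUnit_det).mp hH.isUnit
  have hHs : H.IsSymm := isHermitian_iff_isSymm.mp hH.isHermitian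
  set S := A * H⁻¹ * Aᵀ
  set x₀ := weightedRightInverse H A *ᵥ b - constrainedInverse H A *ᵥ w
  set μ := S⁻¹ *ᵥ (b + (A * H⁻¹) *ᵥ w) with hμ
  have hx₀ : A *ᵥ x₀ = b := by
    simp only [x₀, mulVec_sub, mulVec_mulVec, mul_weightedRightInverse hS,
      mul_constrainedInverse hS, one_mulVec, zero_mulVec, sub_zero]
  have hkkt : H *ᵥ x₀ + w = Aᵀ *ᵥ μ := by
    simp only [x₀, μ, mulVec_sub, mulVec_mulVec, self_mul_weightedRightInverse hHu,
      self_mul_constrainedInverse hHu, mulVec_add, sub_mulVec, one_mulVec, Matrix.mul_assoc Aᵀ]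
    abel
  have hval : 1 / 2 * (x₀ ⬝ᵥ H *ᵥ x₀) + w ⬝ᵥ x₀ =
      -(1 / 2) * (w ⬝ᵥ constrainedInverse H A *ᵥ w) + w ⬝ᵥ weightedRightInverse H A *ᵥ b
        + 1 / 2 * (b ⬝ᵥ S⁻¹ *ᵥ b) := by
    have hμb : μ ⬝ᵥ b = b ⬝ᵥ S⁻¹ *ᵥ b + w ⬝ᵥ weightedRightInverse H A *ᵥ b := by
      rw [hμ, mulVec_add, add_dotProduct, dotProduct_comm, mulVec_mulVec,
        ← transpose_weightedRightInverse hHs, mulVec_transpose, ← dotProduct_mulVec]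
    rw [dotProduct_mulVec_self_of_kkt hkkt, hx₀, hμb, dotProduct_sub]
    ring
  refine ⟨⟨x₀, hx₀, by rw [hval]⟩, ?_⟩
  rintro r ⟨x, hx, rfl⟩
  linarith [quadratic_le_of_kkt hH.posSemidef hkkt (hx.trans hx₀.symm)]

end

/-- Proposition 10: with `f(x) = (1/2)xᵀHx + ζᵀx`, `H ≻ 0`, `A` of full row rank, the dual
function `d(ν) = min_{Ax=b} { f(x) + νᵀ(Cx - c) }` is a concave quadratic whose Hessian is
`-C H^{-1/2}(I - M) H^{-1/2} Cᵀ` with `M = H^{-1/2} Aᵀ (A H⁻¹ Aᵀ)⁻¹ A H^{-1/2}`. -/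
theorem dual_quadratic_affine_h {n m q : ℕ}
    (H : Matrix (Fin n) (Fin n) ℝ) (hH : H.PosDef) (ζ : Fin n → ℝ)
    (A : Matrix (Fin m) (Fin n) ℝ) (hA : A.rank = m) (b : Fin m → ℝ)
    (C : Matrix (Fin q) (Fin n) ℝ) (c : Fin q → ℝ)
    (d : (Fin q → ℝ) → ℝ)
    (hd : ∀ ν, IsLeast {r : ℝ | ∃ x, A.mulVec x = b ∧
        r = (1 / 2) * (x ⬝ᵥ H.mulVec x) + ζ ⬝ᵥ x + ν ⬝ᵥ (C.mulVec x - c)} (d ν)) :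
    ConcaveOn ℝ Set.univ d ∧
    ∃ (ξ : Fin q → ℝ) (θ : ℝ), ∀ ν,
      d ν = -(1 / 2) * (ν ⬝ᵥ (C * ((posSemidefSqrt hH.inv.posSemidef) *
              (1 - (posSemidefSqrt hH.inv.posSemidef) * Aᵀ * (A * H⁻¹ * Aᵀ)⁻¹ * A * (posSemidefSqrt hH.inv.posSemidef))
              * (posSemidefSqrt hH.inv.posSemidef)) * Cᵀ).mulVec ν)
            + ξ ⬝ᵥ ν + θ := by
  refine ⟨ConcaveOn.of_isLeast (fun x => (concaveOn_const _ convex_univ).add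
    (((dotProductBilin ℝ ℝ).flip (C *ᵥ x - c)).concaveOn convex_univ)) hd, ?_⟩
  have hS : IsUnit (A * H⁻¹ * Aᵀ).det :=
    (hH.inv.mul_mul_transpose_of_rank_eq (by simpa using hA)).isUnit.map detMonoidHom
  rw [mul_one_sub_mul_eq_constrainedInverse hH.inv.posSemidef.posSemidefSqrt_mul_self]
  refine ⟨C *ᵥ (weightedRightInverse H A *ᵥ b) - C *ᵥ (constrainedInverse H A *ᵥ ζ) - c,
    ζ ⬝ᵥ weightedRightInverse H A *ᵥ b + 1 / 2 * (b ⬝ᵥ (A * H⁻¹ * Aᵀ)⁻¹ *ᵥ b)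
      - 1 / 2 * (ζ ⬝ᵥ constrainedInverse H A *ᵥ ζ), fun ν => ?_⟩
  have hobjective : ∀ x, 1 / 2 * (x ⬝ᵥ H *ᵥ x) + ζ ⬝ᵥ x + ν ⬝ᵥ (C *ᵥ x - c) =
      1 / 2 * (x ⬝ᵥ H *ᵥ x) + (ζ + Cᵀ *ᵥ ν) ⬝ᵥ x + -(ν ⬝ᵥ c) := fun x => by
    rw [add_dotProduct, mulVec_transpose, ← dotProduct_mulVec, dotProduct_sub]
    ring
  have hdν := hd ν
  simp only [hobjective] at hdν
  have hP : (constrainedInverse H A).IsSymm :=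
    isSymm_constrainedInverse (isHermitian_iff_isSymm.mp hH.isHermitian)
  rw [hdν.unique (isLeast_quadratic_of_mulVec_eq hH hS _ b _),
    dotProduct_mulVec_add_transpose_mulVec hP, add_dotProduct, mulVec_transpose,
    ← dotProduct_mulVec]
  simp only [dotProduct_comm _ ν, dotProduct_sub]
  ring
end

section
/- Let H ∈ S₊ⁿ and A ∈ ℝ^{m×n} with full row rank, such that H is positive definite on the null-space of A, and let [[K₁₁, K₁₂],[K₂₁, K₂₂]] be the inverse of the KKT matrix [[H, Aᵀ],[A, 0]]. Then K₁₁ H K₁₁ = K₁₁ and A K₁₁ = 0. -/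
/-!
A null vector `(x, y)` of the KKT matrix satisfies `A x = 0` and `H x + Aᵀ y = 0`; pairing the
latter with `x` gives `xᵀ H x = (A x)ᵀ y = 0`, so `x = 0`, and then `y = 0` because `Aᵀ` is
injective when `A` has full row rank. Hence the KKT matrix `M` is invertible, and comparing blocks
in `M M⁻¹ = 1` and `M⁻¹ M = 1` gives `A K₁₁ = 0` and `K₁₁ H + K₁₂ A = 1`; multiplying the latter
on the right by `K₁₁` yields `K₁₁ H K₁₁ = K₁₁`.
-/

open Matrix

namespace Matrix

variable {m n K : Type*} [Fintype m] [Fintype n]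

theorem mulVec_transpose_injective_of_rank_eq_card [Field K] (A : Matrix m n K)
    (hA : A.rank = Fintype.card m) : Function.Injective Aᵀ.mulVec := by
  have hrange : Module.finrank K (LinearMap.range Aᵀ.mulVecLin) = Fintype.card m := by
    rw [← rank, rank_transpose, hA]
  have hker := LinearMap.finrank_range_add_finrank_ker Aᵀ.mulVecLin
  rw [hrange, Module.finrank_fintype_fun_eq_card, Nat.add_eq_left, Submodule.finrank_eq_zero,
    LinearMap.ker_eq_bot] at hker
  exact hker

theorem det_fromBlocks_transpose_zero_ne_zero [Field K] [DecidableEq m] [DecidableEq n]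
    (H : Matrix n n K) (A : Matrix m n K) (hA : Function.Injective Aᵀ.mulVec)
    (hker : ∀ x, x ≠ 0 → A *ᵥ x = 0 → x ⬝ᵥ H *ᵥ x ≠ 0) :
    (fromBlocks H Aᵀ A 0).det ≠ 0 := by
  rw [Ne, ← exists_mulVec_eq_zero_iff]
  rintro ⟨v, hv, hMv⟩
  obtain ⟨x, y, rfl⟩ : ∃ x y, v = Sum.elim x y :=
    ⟨v ∘ Sum.inl, v ∘ Sum.inr, (Sum.elim_comp_inl_inr v).symm⟩
  simp only [fromBlocks_mulVec, Sum.elim_comp_inl, Sum.elim_comp_inr, zero_mulVec, add_zero,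
    ← Sum.elim_zero_zero, Sum.elim_eq_iff] at hMv
  obtain ⟨hstat, hfeas⟩ := hMv
  have hx : x = 0 := by
    by_contra hx
    apply hker x hx hfeas
    have := congrArg (x ⬝ᵥ ·) hstat
    simpa [dotProduct_add, dotProduct_mulVec x Aᵀ, vecMul_transpose, hfeas] using this
  have hy : y = 0 := hA (by simpa [hx] using hstat)
  exact hv (by simp [hx, hy])

variable {α : Type*} [CommRing α] [DecidableEq m] [DecidableEq n]

theorem mul_toBlocks₁₁_inv_fromBlocks_zero (H : Matrix n n α) (B : Matrix n m α)
    (A : Matrix m n α) (h : IsUnit (fromBlocks H B A 0).det) :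
    A * (fromBlocks H B A 0)⁻¹.toBlocks₁₁ = 0 := by
  have hK := mul_nonsing_inv _ h
  rw [← fromBlocks_toBlocks (fromBlocks H B A 0)⁻¹, fromBlocks_multiply, ← fromBlocks_one,
    fromBlocks_inj] at hK
  simpa using hK.2.2.1

theorem toBlocks₁₁_inv_fromBlocks_zero_mul_mul_self (H : Matrix n n α) (B : Matrix n m α)
    (A : Matrix m n α) (h : IsUnit (fromBlocks H B A 0).det) :
    (fromBlocks H B A 0)⁻¹.toBlocks₁₁ * H * (fromBlocks H B A 0)⁻¹.toBlocks₁₁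
      = (fromBlocks H B A 0)⁻¹.toBlocks₁₁ := by
  have hK := nonsing_inv_mul _ h
  set K := (fromBlocks H B A 0)⁻¹
  rw [← fromBlocks_toBlocks K, fromBlocks_multiply, ← fromBlocks_one, fromBlocks_inj] at hK
  have hleft : K.toBlocks₁₁ * H + K.toBlocks₁₂ * A = 1 := by simpa using hK.1
  calc K.toBlocks₁₁ * H * K.toBlocks₁₁
      = (K.toBlocks₁₁ * H + K.toBlocks₁₂ * A) * K.toBlocks₁₁ := by
        rw [add_mul, Matrix.mul_assoc K.toBlocks₁₂, mul_toBlocks₁₁_inv_fromBlocks_zero H B A h,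
          Matrix.mul_zero, add_zero]
    _ = K.toBlocks₁₁ := by rw [hleft, Matrix.one_mul]

end Matrix

theorem kkt_inverse_block_identities_general {n m : ℕ}
    (H : Matrix (Fin n) (Fin n) ℝ)
    (A : Matrix (Fin m) (Fin n) ℝ) (hA : A.rank = m)
    (hker : ∀ x : Fin n → ℝ, x ≠ 0 → A.mulVec x = 0 → 0 < x ⬝ᵥ H.mulVec x) :
    (Matrix.fromBlocks H Aᵀ A 0)⁻¹.toBlocks₁₁ * H * (Matrix.fromBlocks H Aᵀ A 0)⁻¹.toBlocks₁₁
      = (Matrix.fromBlocks H Aᵀ A 0)⁻¹.toBlocks₁₁ ∧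
    A * (Matrix.fromBlocks H Aᵀ A 0)⁻¹.toBlocks₁₁ = 0 := by
  have hAt : Function.Injective Aᵀ.mulVec :=
    A.mulVec_transpose_injective_of_rank_eq_card (by rw [hA, Fintype.card_fin])
  have hdet : IsUnit (fromBlocks H Aᵀ A 0).det :=
    (det_fromBlocks_transpose_zero_ne_zero H A hAt fun x hx hAx ↦ (hker x hx hAx).ne').isUnit
  exact ⟨toBlocks₁₁_inv_fromBlocks_zero_mul_mul_self H Aᵀ A hdet,
    mul_toBlocks₁₁_inv_fromBlocks_zero H Aᵀ A hdet⟩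

/-- With `H ⪰ 0` positive definite on the null-space of the full-row-rank matrix `A`, and
`K₁₁` the upper-left block of the inverse of the KKT matrix `[[H, Aᵀ],[A, 0]]`, one has
`K₁₁ H K₁₁ = K₁₁` and `A K₁₁ = 0`. -/
theorem kkt_inverse_block_identities {n m : ℕ}
    (H : Matrix (Fin n) (Fin n) ℝ) (hH : H.PosSemidef)
    (A : Matrix (Fin m) (Fin n) ℝ) (hA : A.rank = m)
    (hker : ∀ x : Fin n → ℝ, x ≠ 0 → A.mulVec x = 0 → 0 < x ⬝ᵥ H.mulVec x) :
    (Matrix.fromBlocks H Aᵀ A 0)⁻¹.toBlocks₁₁ * H * (Matrix.fromBlocks H Aᵀ A 0)⁻¹.toBlocks₁₁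
      = (Matrix.fromBlocks H Aᵀ A 0)⁻¹.toBlocks₁₁ ∧
    A * (Matrix.fromBlocks H Aᵀ A 0)⁻¹.toBlocks₁₁ = 0 :=
  kkt_inverse_block_identities_general H A hA hker
end

section
/- Let g : ℝ^n → ℝ ∪ {∞} be proper, closed, and convex, and let L ∈ S₊₊ⁿ be symmetric positive definite. Define prox_ψ^L(x) = argmin_y { ψ(y) + (1/2)‖y - x‖²_L }. Then for every x ∈ ℝ^n: prox_{g*}^L(x) + L⁻¹ prox_g^{L⁻¹}(L x) = x, where g* is the convex conjugate of g. -/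
/-!
Put `v = x - L⁻¹ q`. Comparing `q` with the points of a segment `[q, w]` in its prox objective
shows that `v` is a subgradient of `g` at `q`, so the Fenchel–Young inequality
`g*(z) ≥ ⟪z, q⟫ - g(q)` is an equality at `z = v`. Adding `½‖z - x‖²_L` to the right side gives a
quadratic minimized exactly at `v`, exceeding its minimum by `½‖z - v‖²_L`. So the objective of
`prox_{g*}^L(x)` grows quadratically away from `v`, and its minimizer `p` must be `v`.
-/

open Matrix

noncomputable def econj {n : ℕ} (g : (Fin n → ℝ) → EReal) (y : Fin n → ℝ) : EReal :=
  ⨆ w, ((y ⬝ᵥ w : ℝ) : EReal) - g w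

open Filter Topology

noncomputable def proxObjective {ι : Type*} [Fintype ι] (ψ : (ι → ℝ) → EReal)
    (A : Matrix ι ι ℝ) (c z : ι → ℝ) : EReal :=
  ψ z + ((1 / 2 * ((z - c) ⬝ᵥ A *ᵥ (z - c)) : ℝ) : EReal)

section Quadratic

variable {ι : Type*} [Fintype ι] {A : Matrix ι ι ℝ}

theorem Matrix.IsSymm.dotProduct_mulVec_comm (hA : A.IsSymm) (u v : ι → ℝ) :
    u ⬝ᵥ A *ᵥ v = v ⬝ᵥ A *ᵥ u := by
  simpa only [hA.eq] using dotProduct_transpose_mulVec A u v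

theorem Matrix.IsSymm.quadForm_add (hA : A.IsSymm) (u v : ι → ℝ) :
    (u + v) ⬝ᵥ A *ᵥ (u + v) = u ⬝ᵥ A *ᵥ u + 2 * (u ⬝ᵥ A *ᵥ v) + v ⬝ᵥ A *ᵥ v := by
  simp only [mulVec_add, dotProduct_add, add_dotProduct, hA.dotProduct_mulVec_comm v u]
  ring

theorem Matrix.IsSymm.dotProduct_add_half_quadForm (hA : A.IsSymm) {x v q : ι → ℝ}
    (hq : A *ᵥ (x - v) = q) (z : ι → ℝ) :
    z ⬝ᵥ q + 1 / 2 * ((z - x) ⬝ᵥ A *ᵥ (z - x))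
      = v ⬝ᵥ q + 1 / 2 * ((v - x) ⬝ᵥ A *ᵥ (v - x)) + 1 / 2 * ((z - v) ⬝ᵥ A *ᵥ (z - v)) := by
  subst hq
  have hsplit : z ⬝ᵥ A *ᵥ (x - v) = (z - v) ⬝ᵥ A *ᵥ (x - v) + v ⬝ᵥ A *ᵥ (x - v) := by
    rw [sub_dotProduct]; ring
  rw [hsplit, show z - x = (z - v) + (v - x) by abel, hA.quadForm_add,
    show x - v = -(v - x) by abel, mulVec_neg, dotProduct_neg]
  ring

theorem Matrix.PosDef.eq_zero_of_dotProduct_mulVec_nonpos (hA : A.PosDef) {u : ι → ℝ}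
    (hu : u ⬝ᵥ A *ᵥ u ≤ 0) : u = 0 := by
  by_contra hne
  simpa using (hA.dotProduct_mulVec_pos hne).trans_le hu

end Quadratic

theorem le_of_forall_le_add_mul {a b c : ℝ} (h : ∀ t : ℝ, 0 < t → t ≤ 1 → a ≤ b + t * c) :
    a ≤ b := by
  have hlim : Tendsto (fun t : ℝ => b + t * c) (𝓝[>] 0) (𝓝 b) :=
    ((by fun_prop : Continuous fun t : ℝ => b + t * c).tendsto' 0 b (by simp)).mono_left
      nhdsWithin_le_nhds
  refine ge_of_tendsto hlim ?_
  filter_upwards [Ioc_mem_nhdsGT one_pos] with t ht using h t ht.1 ht.2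

section ProxOptimality

variable {ι : Type*} [Fintype ι] {ψ : (ι → ℝ) → EReal} {A : Matrix ι ι ℝ} {c q : ι → ℝ}

theorem ne_top_of_isMin_proxObjective (hq : ∀ z, proxObjective ψ A c q ≤ proxObjective ψ A c z)
    (hψ : ∃ z, ψ z ≠ ⊤) : ψ q ≠ ⊤ := by
  obtain ⟨z, hz⟩ := hψ
  intro htop
  have h := hq z
  rw [proxObjective, proxObjective, htop, EReal.top_add_coe, top_le_iff] at h
  exact EReal.add_lt_top hz (EReal.coe_ne_top _) |>.ne h

theorem subgradient_of_isMin_proxObjective (hψ_bot : ∀ x, ψ x ≠ ⊥)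
    (hψ_conv : ∀ (x y : ι → ℝ) (θ : ℝ), 0 ≤ θ → θ ≤ 1 →
      ψ (θ • x + (1 - θ) • y) ≤ (θ : EReal) * ψ x + ((1 - θ : ℝ) : EReal) * ψ y)
    (hA : A.IsSymm) {a : ℝ} (hqa : ψ q = a)
    (hq : ∀ z, proxObjective ψ A c q ≤ proxObjective ψ A c z) (w : ι → ℝ) :
    ((a + (A *ᵥ (c - q)) ⬝ᵥ (w - q) : ℝ) : EReal) ≤ ψ w := by
  rcases eq_or_ne (ψ w) ⊤ with hw | hw
  · simp [hw]
  lift ψ w to ℝ using ⟨hw, hψ_bot w⟩ with b hb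
  rw [EReal.coe_le_coe_iff]
  set d := w - q
  have hgrad : (A *ᵥ (c - q)) ⬝ᵥ d = -((q - c) ⬝ᵥ A *ᵥ d) := by
    rw [dotProduct_comm, hA.dotProduct_mulVec_comm, ← neg_sub q c, neg_dotProduct]
  refine le_of_forall_le_add_mul (c := d ⬝ᵥ A *ᵥ d / 2) fun t ht0 ht1 => ?_
  have hzt : t • w + (1 - t) • q - c = (q - c) + t • d := by module
  have hconv := hψ_conv w q t ht0.le ht1
  have hmin := hq (t • w + (1 - t) • q)
  rw [← hb, hqa, ← EReal.coe_mul, ← EReal.coe_mul, ← EReal.coe_add] at hconv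
  rw [proxObjective, proxObjective, hqa, ← EReal.coe_add] at hmin
  have hreal := (hmin.trans (add_le_add_left hconv _)).trans_eq (EReal.coe_add _ _).symm
  rw [EReal.coe_le_coe_iff, hzt, hA.quadForm_add] at hreal
  simp only [mulVec_smul, dotProduct_smul, smul_dotProduct, smul_eq_mul] at hreal
  rw [hgrad]
  refine le_of_mul_le_mul_left ?_ ht0
  linear_combination hreal

end ProxOptimality

section Conjugate

variable {n : ℕ} {g : (Fin n → ℝ) → EReal} {q : Fin n → ℝ} {a : ℝ}

theorem coe_sub_le_econj (hqa : g q = a) (y : Fin n → ℝ) :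
    ((y ⬝ᵥ q - a : ℝ) : EReal) ≤ econj g y := by
  rw [EReal.coe_sub, ← hqa]
  exact le_iSup (fun w => ((y ⬝ᵥ w : ℝ) : EReal) - g w) q

theorem econj_eq_of_subgradient {v : Fin n → ℝ} (hqa : g q = a)
    (hsub : ∀ w, ((a + v ⬝ᵥ (w - q) : ℝ) : EReal) ≤ g w) :
    econj g v = ((v ⬝ᵥ q - a : ℝ) : EReal) := by
  refine le_antisymm (iSup_le fun w => ?_) (coe_sub_le_econj hqa v)
  rw [EReal.sub_le_iff_le_add (.inr (EReal.coe_ne_top _)) (.inr (EReal.coe_ne_bot _))]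
  calc ((v ⬝ᵥ w : ℝ) : EReal)
      = ((v ⬝ᵥ q - a : ℝ) : EReal) + ((a + v ⬝ᵥ (w - q) : ℝ) : EReal) := by
        rw [← EReal.coe_add, dotProduct_sub]; ring_nf
    _ ≤ ((v ⬝ᵥ q - a : ℝ) : EReal) + g w := add_le_add_right (hsub w) _

theorem add_half_quadForm_le_proxObjective_econj {L : Matrix (Fin n) (Fin n) ℝ} (hL : L.IsSymm)
    {x v : Fin n → ℝ} (hqa : g q = a) (hv : L *ᵥ (x - v) = q) (z : Fin n → ℝ) :
    ((v ⬝ᵥ q - a + 1 / 2 * ((v - x) ⬝ᵥ L *ᵥ (v - x)) + 1 / 2 * ((z - v) ⬝ᵥ L *ᵥ (z - v)) : ℝ)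
      : EReal) ≤ proxObjective (econj g) L x z :=
  calc _ = ((z ⬝ᵥ q - a : ℝ) : EReal) + ((1 / 2 * ((z - x) ⬝ᵥ L *ᵥ (z - x)) : ℝ) : EReal) := by
        rw [← EReal.coe_add, EReal.coe_eq_coe_iff]
        linarith [hL.dotProduct_add_half_quadForm hv z]
    _ ≤ proxObjective (econj g) L x z := add_le_add_left (coe_sub_le_econj hqa z) _

end Conjugate

theorem generalized_moreau_decomposition_general {n : ℕ}
    (g : (Fin n → ℝ) → EReal)
    (hproper_bot : ∀ x, g x ≠ ⊥) (hproper_top : ∃ x, g x ≠ ⊤)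
    (hgconv : ∀ (x y : Fin n → ℝ) (θ : ℝ), 0 ≤ θ → θ ≤ 1 →
      g (θ • x + (1 - θ) • y) ≤ (θ : EReal) * g x + ((1 - θ : ℝ) : EReal) * g y)
    (L : Matrix (Fin n) (Fin n) ℝ) (hL : L.PosDef)
    (x p q : Fin n → ℝ)
    (hp : ∀ z, econj g p + (((1 / 2) * ((p - x) ⬝ᵥ L.mulVec (p - x)) : ℝ) : EReal)
        ≤ econj g z + (((1 / 2) * ((z - x) ⬝ᵥ L.mulVec (z - x)) : ℝ) : EReal))
    (hq : ∀ z, g q + (((1 / 2) * ((q - L.mulVec x) ⬝ᵥ (L⁻¹).mulVec (q - L.mulVec x)) : ℝ) : EReal)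
        ≤ g z + (((1 / 2) * ((z - L.mulVec x) ⬝ᵥ (L⁻¹).mulVec (z - L.mulVec x)) : ℝ) : EReal)) :
    p + (L⁻¹).mulVec q = x := by
  have hLdet : IsUnit L.det := (isUnit_iff_isUnit_det L).1 hL.isUnit
  obtain ⟨a, hqa⟩ : ∃ a : ℝ, g q = a :=
    ⟨_, (EReal.coe_toReal (ne_top_of_isMin_proxObjective hq hproper_top) (hproper_bot q)).symm⟩
  set v := x - L⁻¹ *ᵥ q
  have hLv : L *ᵥ (x - v) = q := by
    simp [v, mulVec_mulVec, mul_nonsing_inv L hLdet]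
  have hsub : ∀ w, ((a + v ⬝ᵥ (w - q) : ℝ) : EReal) ≤ g w := by
    have hMv : L⁻¹ *ᵥ (L *ᵥ x - q) = v := by
      simp [v, mulVec_sub, mulVec_mulVec, nonsing_inv_mul L hLdet]
    simpa only [hMv] using subgradient_of_isMin_proxObjective hproper_bot hgconv
      (isHermitian_iff_isSymm.1 hL.inv.isHermitian) hqa hq
  have hgrowth := (add_half_quadForm_le_proxObjective_econj
    (isHermitian_iff_isSymm.1 hL.isHermitian) hqa hLv p).trans (hp v)
  rw [econj_eq_of_subgradient hqa hsub, ← EReal.coe_add, EReal.coe_le_coe_iff] at hgrowth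
  have hpv : p - v = 0 := hL.eq_zero_of_dotProduct_mulVec_nonpos (by linarith)
  rw [sub_eq_zero.1 hpv, sub_add_cancel]

/-- Proposition 14 (generalized Moreau decomposition): for proper closed convex `g` and
`L ≻ 0`, `prox_{g*}^L(x) + L⁻¹ prox_g^{L⁻¹}(Lx) = x`. Here `p = prox_{g*}^L(x)` and
`q = prox_g^{L⁻¹}(Lx)` are characterized as the minimizers of the respective objectives. -/
theorem generalized_moreau_decomposition {n : ℕ}
    (g : (Fin n → ℝ) → EReal)
    (hproper_bot : ∀ x, g x ≠ ⊥) (hproper_top : ∃ x, g x ≠ ⊤)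
    (hclosed : LowerSemicontinuous g)
    (hgconv : ∀ (x y : Fin n → ℝ) (θ : ℝ), 0 ≤ θ → θ ≤ 1 →
      g (θ • x + (1 - θ) • y) ≤ (θ : EReal) * g x + ((1 - θ : ℝ) : EReal) * g y)
    (L : Matrix (Fin n) (Fin n) ℝ) (hL : L.PosDef)
    (x p q : Fin n → ℝ)
    (hp : ∀ z, econj g p + (((1 / 2) * ((p - x) ⬝ᵥ L.mulVec (p - x)) : ℝ) : EReal)
        ≤ econj g z + (((1 / 2) * ((z - x) ⬝ᵥ L.mulVec (z - x)) : ℝ) : EReal))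
    (hq : ∀ z, g q + (((1 / 2) * ((q - L.mulVec x) ⬝ᵥ (L⁻¹).mulVec (q - L.mulVec x)) : ℝ) : EReal)
        ≤ g z + (((1 / 2) * ((z - L.mulVec x) ⬝ᵥ (L⁻¹).mulVec (z - L.mulVec x)) : ℝ) : EReal)) :
    p + (L⁻¹).mulVec q = x :=
  generalized_moreau_decomposition_general g hproper_bot hproper_top hgconv L hL x p q hp hq
end

section
/- Let f : ℝ^n → ℝ be differentiable and strongly convex with matrix H ∈ S₊₊ⁿ, h proper closed convex, C ∈ ℝ^{q×n}. Then the map ν ↦ x*(ν) = argmin_x { f(x) + h(x) + νᵀCx } is Lipschitz continuous from (ℝ^q, ‖·‖₂) to (ℝ^n, ‖·‖₂) with constant ‖C‖₂ / λ_min(H). -/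
/-!
Write `Fᵥ = f + ⟨ν, C ·⟩ + h`. Strong convexity of `f` and convexity of `h` give quadratic growth
at a minimizer, `Fᵥ (x*(ν)) + ½ ‖y - x*(ν)‖²_H ≤ Fᵥ y`: compare `Fᵥ` along the segment from `x*(ν)`
to `y` and let the step shrink to `0`. Adding the two growth inequalities for `ν₁` and `ν₂`, each
evaluated at the other's minimizer, gives `‖x₁ - x₂‖²_H ≤ ⟨ν₁ - ν₂, C (x₂ - x₁)⟩`, and
`λ_min ‖·‖² ≤ ‖·‖²_H`, Cauchy–Schwarz and `‖C‖₂` turn this into the Lipschitz bound.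
-/

open Matrix

open Filter Topology

section StrongConvexity

variable {E : Type*}

theorem ne_top_of_isMinimizer {φ : E → ℝ} {h : E → EReal} {x x₀ : E}
    (hmin : ∀ z, (φ x : EReal) + h x ≤ φ z + h z) (hx₀ : h x₀ ≠ ⊤) : h x ≠ ⊤ := by
  intro htop
  have := hmin x₀
  rw [htop, EReal.add_top_of_ne_bot (EReal.coe_ne_bot _), top_le_iff] at this
  exact EReal.add_lt_top (EReal.coe_ne_top _) hx₀ |>.ne this

variable [AddCommGroup E] [Module ℝ E]

def FirstOrderStronglyConvex (f : E → ℝ) (D : E → Module.Dual ℝ E) (Q : QuadraticForm ℝ E) :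
    Prop :=
  ∀ x y, f y + D y (x - y) + 1 / 2 * Q (x - y) ≤ f x

def ERealConvex (h : E → EReal) : Prop :=
  ∀ (x y : E) (θ : ℝ), 0 ≤ θ → θ ≤ 1 →
    h (θ • x + (1 - θ) • y) ≤ (θ : EReal) * h x + ((1 - θ : ℝ) : EReal) * h y

namespace FirstOrderStronglyConvex

variable {f : E → ℝ} {D : E → Module.Dual ℝ E} {Q : QuadraticForm ℝ E}

theorem add_dual (hf : FirstOrderStronglyConvex f D Q) (ℓ : Module.Dual ℝ E) :
    FirstOrderStronglyConvex (fun x => f x + ℓ x) (fun y => D y + ℓ) Q := by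
  intro x y
  have hℓ : ℓ y + ℓ (x - y) = ℓ x := by rw [map_sub]; abel
  have := hf x y
  simp only [LinearMap.add_apply]
  linarith

theorem apply_combo_add_le (hf : FirstOrderStronglyConvex f D Q) (x y : E) {θ : ℝ}
    (hθ₀ : 0 ≤ θ) (hθ₁ : θ ≤ 1) :
    f (θ • y + (1 - θ) • x) + 1 / 2 * (θ * (1 - θ)) * Q (y - x)
      ≤ θ * f y + (1 - θ) * f x := by
  set z := θ • y + (1 - θ) • x
  have hy : y - z = (1 - θ) • (y - x) := by simp only [z]; module
  have hx : x - z = (-θ) • (y - x) := by simp only [z]; module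
  have hfy := hf y z
  have hfx := hf x z
  rw [hy, map_smul, QuadraticMap.map_smul, smul_eq_mul, smul_eq_mul] at hfy
  rw [hx, map_smul, QuadraticMap.map_smul, smul_eq_mul, smul_eq_mul] at hfx
  linear_combination θ * hfy + (1 - θ) * hfx

end FirstOrderStronglyConvex

theorem add_quadratic_le_of_isMinimizer {φ : E → ℝ} {D : E → Module.Dual ℝ E}
    {Q : QuadraticForm ℝ E} (hφ : FirstOrderStronglyConvex φ D Q) {h : E → EReal}
    (hh : ERealConvex h) {x y : E} (hmin : ∀ z, (φ x : EReal) + h x ≤ φ z + h z) {r s : ℝ}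
    (hx : h x = r) (hy : h y = s) :
    φ x + r + 1 / 2 * Q (y - x) ≤ φ y + s := by
  have hseg : ∀ θ ∈ Set.Ioc (0 : ℝ) 1, φ x + r + 1 / 2 * ((1 - θ) * Q (y - x)) ≤ φ y + s := by
    rintro θ ⟨hθ₀, hθ₁⟩
    set z := θ • y + (1 - θ) • x
    have hz : h z ≤ ((θ * s + (1 - θ) * r : ℝ) : EReal) := by
      have := hh y x θ hθ₀.le hθ₁
      rwa [hx, hy, ← EReal.coe_mul, ← EReal.coe_mul, ← EReal.coe_add] at this
    have hmin_z : φ x + r ≤ φ z + (θ * s + (1 - θ) * r) := by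
      have := (hmin z).trans (add_le_add_right hz _)
      rwa [hx, ← EReal.coe_add, ← EReal.coe_add, EReal.coe_le_coe_iff] at this
    have hφz := hφ.apply_combo_add_le x y hθ₀.le hθ₁
    refine le_of_mul_le_mul_left ?_ hθ₀
    linear_combination hmin_z + hφz
  have hlim : Tendsto (fun θ : ℝ => φ x + r + 1 / 2 * ((1 - θ) * Q (y - x))) (𝓝[>] 0)
      (𝓝 (φ x + r + 1 / 2 * Q (y - x))) := by
    refine tendsto_nhdsWithin_of_tendsto_nhds ?_
    exact (by fun_prop : Continuous _).tendsto' _ _ (by simp)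
  exact le_of_tendsto hlim (eventually_of_mem (Ioc_mem_nhdsGT one_pos) hseg)

theorem quadratic_le_of_isMinimizers {f : E → ℝ} {D : E → Module.Dual ℝ E}
    {Q : QuadraticForm ℝ E} (hf : FirstOrderStronglyConvex f D Q) {h : E → EReal}
    (hh : ERealConvex h) (hbot : ∀ x, h x ≠ ⊥) (htop : ∃ x, h x ≠ ⊤) {ℓ₁ ℓ₂ : Module.Dual ℝ E}
    {x₁ x₂ : E}
    (hmin₁ : ∀ z, ((f x₁ + ℓ₁ x₁ : ℝ) : EReal) + h x₁ ≤ ((f z + ℓ₁ z : ℝ) : EReal) + h z)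
    (hmin₂ : ∀ z, ((f x₂ + ℓ₂ x₂ : ℝ) : EReal) + h x₂ ≤ ((f z + ℓ₂ z : ℝ) : EReal) + h z) :
    Q (x₁ - x₂) ≤ ℓ₁ (x₂ - x₁) - ℓ₂ (x₂ - x₁) := by
  obtain ⟨x₀, hx₀⟩ := htop
  have hx₁ := (EReal.coe_toReal (ne_top_of_isMinimizer (φ := fun z => f z + ℓ₁ z) hmin₁ hx₀)
    (hbot x₁)).symm
  have hx₂ := (EReal.coe_toReal (ne_top_of_isMinimizer (φ := fun z => f z + ℓ₂ z) hmin₂ hx₀)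
    (hbot x₂)).symm
  have h₁ := add_quadratic_le_of_isMinimizer (hf.add_dual ℓ₁) hh hmin₁ hx₁ hx₂
  have h₂ := add_quadratic_le_of_isMinimizer (hf.add_dual ℓ₂) hh hmin₂ hx₂ hx₁
  have hQ := Q.map_sub x₁ x₂
  simp only [map_sub]
  linarith

end StrongConvexity

theorem dotProduct_le_sqrt_mul_sqrt {ι : Type*} [Fintype ι] (u w : ι → ℝ) :
    u ⬝ᵥ w ≤ √(u ⬝ᵥ u) * √(w ⬝ᵥ w) := by
  simpa [dotProduct, sq] using Real.sum_mul_le_sqrt_mul_sqrt Finset.univ u w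

theorem le_div_of_mul_mul_self_le {a c lam : ℝ} (ha : 0 ≤ a) (hc : 0 ≤ c) (hlam : 0 < lam)
    (h : lam * (a * a) ≤ c * a) : a ≤ c / lam := by
  rw [le_div_iff₀ hlam]
  rcases ha.eq_or_lt with rfl | ha
  · simpa using hc
  · nlinarith

theorem minimizer_map_lipschitz_general {n q : ℕ} (f : (Fin n → ℝ) → ℝ)
    (f' : (Fin n → ℝ) → (Fin n → ℝ))
    (H : Matrix (Fin n) (Fin n) ℝ)
    (hstrong : ∀ x y, f y + f' y ⬝ᵥ (x - y)
        + (1 / 2) * ((x - y) ⬝ᵥ H.mulVec (x - y)) ≤ f x)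
    (h : (Fin n → ℝ) → EReal)
    (hproper_bot : ∀ x, h x ≠ ⊥) (hproper_top : ∃ x, h x ≠ ⊤)
    (hhconv : ∀ (x y : Fin n → ℝ) (θ : ℝ), 0 ≤ θ → θ ≤ 1 →
      h (θ • x + (1 - θ) • y) ≤ (θ : EReal) * h x + ((1 - θ : ℝ) : EReal) * h y)
    (C : Matrix (Fin q) (Fin n) ℝ)
    (xs : (Fin q → ℝ) → (Fin n → ℝ))
    (hxs : ∀ ν x, ((f (xs ν) + ν ⬝ᵥ C.mulVec (xs ν) : ℝ) : EReal) + h (xs ν)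
        ≤ ((f x + ν ⬝ᵥ C.mulVec x : ℝ) : EReal) + h x)
    (sC : ℝ)
    (hsC : IsLeast {t : ℝ | 0 ≤ t ∧ ∀ v : Fin n → ℝ,
        Real.sqrt (C.mulVec v ⬝ᵥ C.mulVec v) ≤ t * Real.sqrt (v ⬝ᵥ v)} sC)
    (lam : ℝ) (hlam : 0 < lam)
    (hlamG : IsGreatest {t : ℝ | ∀ v : Fin n → ℝ, t * (v ⬝ᵥ v) ≤ v ⬝ᵥ H.mulVec v} lam) :
    ∀ ν₁ ν₂, Real.sqrt ((xs ν₁ - xs ν₂) ⬝ᵥ (xs ν₁ - xs ν₂))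
      ≤ (sC / lam) * Real.sqrt ((ν₁ - ν₂) ⬝ᵥ (ν₁ - ν₂)) := by
  intro ν₁ ν₂
  have hf : FirstOrderStronglyConvex f (fun y => dotProductBilin ℝ ℝ (f' y)) H.toQuadraticForm' :=
    fun x y => by simpa [Matrix.toQuadraticForm', toLinearMap₂'_apply'] using hstrong x y
  have hmono := quadratic_le_of_isMinimizers hf hhconv hproper_bot hproper_top
    (ℓ₁ := toLinearMap₂' ℝ C ν₁) (ℓ₂ := toLinearMap₂' ℝ C ν₂)
    (by simpa only [toLinearMap₂'_apply'] using hxs ν₁)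
    (by simpa only [toLinearMap₂'_apply'] using hxs ν₂)
  set d := xs ν₁ - xs ν₂
  have hdd : (xs ν₂ - xs ν₁) ⬝ᵥ (xs ν₂ - xs ν₁) = d ⬝ᵥ d := by
    rw [← neg_sub, neg_dotProduct, dotProduct_neg, neg_neg]
  rw [div_mul_eq_mul_div]
  refine le_div_of_mul_mul_self_le (Real.sqrt_nonneg _)
    (mul_nonneg hsC.1.1 (Real.sqrt_nonneg _)) hlam ?_
  calc lam * (√(d ⬝ᵥ d) * √(d ⬝ᵥ d)) = lam * (d ⬝ᵥ d) := by
        rw [Real.mul_self_sqrt (by simpa using dotProduct_star_self_nonneg d)]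
    _ ≤ d ⬝ᵥ H *ᵥ d := hlamG.1 d
    _ ≤ (ν₁ - ν₂) ⬝ᵥ C *ᵥ (xs ν₂ - xs ν₁) := by
        simpa [Matrix.toQuadraticForm', toLinearMap₂'_apply', sub_dotProduct] using hmono
    _ ≤ √((ν₁ - ν₂) ⬝ᵥ (ν₁ - ν₂)) * √(C *ᵥ (xs ν₂ - xs ν₁) ⬝ᵥ C *ᵥ (xs ν₂ - xs ν₁)) :=
        dotProduct_le_sqrt_mul_sqrt _ _
    _ ≤ √((ν₁ - ν₂) ⬝ᵥ (ν₁ - ν₂)) * (sC * √(d ⬝ᵥ d)) := by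
        gcongr
        exact hdd ▸ hsC.1.2 _
    _ = sC * √((ν₁ - ν₂) ⬝ᵥ (ν₁ - ν₂)) * √(d ⬝ᵥ d) := by ring

/-- The map `ν ↦ x*(ν) = argmin_x { f(x) + h(x) + νᵀCx }` is Lipschitz (in Euclidean norms)
with constant `‖C‖₂ / λ_min(H)`, for `f` differentiable and strongly convex with matrix
`H ≻ 0` and `h` proper closed convex. The spectral norm `‖C‖₂ = sC` is characterized as the
least operator bound, and `λ_min(H) = lam` as the greatest lower Rayleigh-quotient bound. -/
theorem minimizer_map_lipschitz {n q : ℕ} (f : (Fin n → ℝ) → ℝ)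
    (f' : (Fin n → ℝ) → (Fin n → ℝ))
    (H : Matrix (Fin n) (Fin n) ℝ) (hH : H.PosDef)
    (hdiff : ∀ x, HasFDerivAt f (dotCLM (f' x)) x)
    (hstrong : ∀ x y, f y + f' y ⬝ᵥ (x - y)
        + (1 / 2) * ((x - y) ⬝ᵥ H.mulVec (x - y)) ≤ f x)
    (h : (Fin n → ℝ) → EReal)
    (hproper_bot : ∀ x, h x ≠ ⊥) (hproper_top : ∃ x, h x ≠ ⊤)
    (hclosed : LowerSemicontinuous h)
    (hhconv : ∀ (x y : Fin n → ℝ) (θ : ℝ), 0 ≤ θ → θ ≤ 1 →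
      h (θ • x + (1 - θ) • y) ≤ (θ : EReal) * h x + ((1 - θ : ℝ) : EReal) * h y)
    (C : Matrix (Fin q) (Fin n) ℝ)
    (xs : (Fin q → ℝ) → (Fin n → ℝ))
    (hxs : ∀ ν x, ((f (xs ν) + ν ⬝ᵥ C.mulVec (xs ν) : ℝ) : EReal) + h (xs ν)
        ≤ ((f x + ν ⬝ᵥ C.mulVec x : ℝ) : EReal) + h x)
    (sC : ℝ)
    (hsC : IsLeast {t : ℝ | 0 ≤ t ∧ ∀ v : Fin n → ℝ,
        Real.sqrt (C.mulVec v ⬝ᵥ C.mulVec v) ≤ t * Real.sqrt (v ⬝ᵥ v)} sC)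
    (lam : ℝ) (hlam : 0 < lam)
    (hlamG : IsGreatest {t : ℝ | ∀ v : Fin n → ℝ, t * (v ⬝ᵥ v) ≤ v ⬝ᵥ H.mulVec v} lam) :
    ∀ ν₁ ν₂, Real.sqrt ((xs ν₁ - xs ν₂) ⬝ᵥ (xs ν₁ - xs ν₂))
      ≤ (sC / lam) * Real.sqrt ((ν₁ - ν₂) ⬝ᵥ (ν₁ - ν₂)) :=
  minimizer_map_lipschitz_general f f' H hstrong h hproper_bot hproper_top hhconv C xs hxs sC hsC
    lam hlam hlamG
end
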